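/- arXiv:1911.10658 — 2 statements merged into one kernel-verified Lean document; each statement's English description precedes it below -/
import Mathlib

section
/- Take the separation H = {1,…,k}, L = {k+1,…,d} with 1 ≤ k < d. Let P be the (k+1)×d matrix with P_{i,i} = 1 for 1 ≤ i ≤ k, P_{k+1,j} = 1 for k+1 ≤ j ≤ d, and all other entries zero. Then every PQR matrix A with respect to (H,L) factors as A = Pᵀ M P, where M is the (k+1)×(k+1) symmetric matrix with zero diagonal given by M_{i,j} = M_{j,i} = p_{i,j} for 1 ≤ i < j ≤ k, M_{i,k+1} = M_{k+1,i} = q_i for 1 ≤ i ≤ k, and M_{k+1,k+1} = 0, where p_{i,j} and q_i are the parameters of A. -/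
open Matrix Finset

/-- `A` is a PQR matrix with respect to the separation `(H, L)` of the feature
indices `{0, …, d-1}`: it is symmetric with zero diagonal, its entry `A i j`
for `i ∈ H`, `j ∈ L` depends only on `i` (a shared parameter `qᵢ`), and its
off-diagonal entries within `L` vanish. -/
def IsPQRMatrix (d : ℕ) (H L : Finset (Fin d)) (A : Matrix (Fin d) (Fin d) ℝ) : Prop :=
  (∀ i j, A i j = A j i) ∧
  (∀ i, A i i = 0) ∧
  (∀ i ∈ H, ∀ j ∈ L, ∀ j' ∈ L, A i j = A i j') ∧
  (∀ i ∈ L, ∀ j ∈ L, i ≠ j → A i j = 0)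

/-- The `(k+1) × d` projection matrix `P` for the separation
`H = {0,…,k-1}`, `L = {k,…,d-1}`:  `P i i = 1` for `i < k`,
`P k j = 1` for `j ≥ k`, and all other entries are zero. -/
def projMat (d k : ℕ) : Matrix (Fin (k + 1)) (Fin d) ℝ :=
  Matrix.of fun i j =>
    if ((i : ℕ) = (j : ℕ) ∧ (i : ℕ) < k) ∨ ((i : ℕ) = k ∧ k ≤ (j : ℕ)) then 1 else 0

/-- The `(k+1) × (k+1)` symmetric matrix `M` with zero diagonal built from the
parameters of a PQR matrix `A` (for the separation `H = {0,…,k-1}`,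
`L = {k,…,d-1}` with `k < d`):  `M i j = p_{i,j} = A i j` for `i, j < k`,
`M i k = M k i = q_i = A i k` for `i < k`, and `M k k = 0`. -/
def coreMat (d k : ℕ) (hkd : k < d) (A : Matrix (Fin d) (Fin d) ℝ) :
    Matrix (Fin (k + 1)) (Fin (k + 1)) ℝ :=
  Matrix.of fun i j =>
    if hi : (i : ℕ) < k then
      if hj : (j : ℕ) < k then A ⟨i, hi.trans hkd⟩ ⟨j, hj.trans hkd⟩
      else A ⟨i, hi.trans hkd⟩ ⟨k, hkd⟩
    else
      if hj : (j : ℕ) < k then A ⟨k, hkd⟩ ⟨j, hj.trans hkd⟩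
      else 0

/-! `P` is the 0/1 matrix of the map `j ↦ min j k : Fin d → Fin (k + 1)`, which collapses `L` to
the single index `k`, so `Pᵀ M P` is the submatrix of `M` along that map. The PQR conditions say
precisely that `A i j` depends only on the collapsed indices, vanishing on `L × L`. -/

theorem Matrix.one_submatrix_transpose_mul_mul {m n R : Type*} [Fintype m] [DecidableEq m]
    [NonAssocSemiring R] (f : n → m) (M : Matrix m m R) :
    ((1 : Matrix m m R).submatrix id f)ᵀ * M * (1 : Matrix m m R).submatrix id f =
      M.submatrix f f := by
  rw [transpose_submatrix, transpose_one, ← Equiv.coe_refl, one_submatrix_mul, mul_submatrix_one]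
  simp

theorem projMat_eq_one_submatrix (d k : ℕ) :
    projMat d k = (1 : Matrix (Fin (k + 1)) (Fin (k + 1)) ℝ).submatrix id
      (fun j : Fin d => Fin.clamp j k) := by
  ext a j
  simp only [projMat, of_apply, submatrix_apply, id, one_apply, Fin.ext_iff, Fin.coe_clamp]
  congr 1
  apply propext
  omega

namespace IsPQRMatrix

variable {d : ℕ} {H L : Finset (Fin d)} {A : Matrix (Fin d) (Fin d) ℝ}

theorem apply_eq_zero (hA : IsPQRMatrix d H L A) {i j : Fin d} (hi : i ∈ L) (hj : j ∈ L) :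
    A i j = 0 := by
  obtain rfl | hij := eq_or_ne i j
  · exact hA.2.1 i
  · exact hA.2.2.2 i hi j hj hij

theorem apply_eq_apply_left (hA : IsPQRMatrix d H L A) {i j j' : Fin d} (hi : i ∈ H)
    (hj : j ∈ L) (hj' : j' ∈ L) : A j i = A j' i := by
  rw [hA.1 j, hA.1 j', hA.2.2.1 i hi j hj j' hj']

theorem eq_coreMat_submatrix {k : ℕ} (hkd : k < d)
    (hA : IsPQRMatrix d (univ.filter fun i : Fin d => (i : ℕ) < k)
      (univ.filter fun i : Fin d => k ≤ (i : ℕ)) A) :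
    A = (coreMat d k hkd A).submatrix (fun j : Fin d => Fin.clamp j k)
      (fun j : Fin d => Fin.clamp j k) := by
  have hkL : (⟨k, hkd⟩ : Fin d) ∈ univ.filter fun i : Fin d => k ≤ (i : ℕ) := by simp
  ext i j
  simp only [submatrix_apply, coreMat, of_apply, Fin.coe_clamp]
  rcases lt_or_ge (i : ℕ) k with hi | hi <;> rcases lt_or_ge (j : ℕ) k with hj | hj
  · simp only [min_eq_left hi.le, min_eq_left hj.le, dif_pos hi, dif_pos hj]
  · simp only [min_eq_left hi.le, min_eq_right hj, dif_pos hi, dif_neg (lt_irrefl k)]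
    exact hA.2.2.1 i (by simpa) j (by simpa) _ hkL
  · simp only [min_eq_left hj.le, min_eq_right hi, dif_neg (lt_irrefl k), dif_pos hj]
    exact hA.apply_eq_apply_left (by simpa) (by simpa) hkL
  · simp only [min_eq_right hi, min_eq_right hj, dif_neg (lt_irrefl k)]
    exact hA.apply_eq_zero (by simpa) (by simpa)

end IsPQRMatrix

theorem pqr_factorization_general (d k : ℕ) (hkd : k < d)
    (A : Matrix (Fin d) (Fin d) ℝ)
    (hA : IsPQRMatrix d (Finset.univ.filter fun i : Fin d => (i : ℕ) < k)
      (Finset.univ.filter fun i : Fin d => k ≤ (i : ℕ)) A) :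
    A = (projMat d k)ᵀ * coreMat d k hkd A * projMat d k := by
  rw [projMat_eq_one_submatrix, Matrix.one_submatrix_transpose_mul_mul]
  exact hA.eq_coreMat_submatrix hkd

/-- For the separation `H = {0,…,k-1}`, `L = {k,…,d-1}` with `1 ≤ k < d`, every
PQR matrix `A` with respect to `(H, L)` factors as `A = Pᵀ M P`, where `P` is
the projection matrix and `M` the `(k+1)×(k+1)` symmetric zero-diagonal matrix
built from the parameters `p_{i,j}`, `q_i` of `A`. -/
theorem pqr_factorization (d k : ℕ) (hk : 1 ≤ k) (hkd : k < d)
    (A : Matrix (Fin d) (Fin d) ℝ)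
    (hA : IsPQRMatrix d (Finset.univ.filter fun i : Fin d => (i : ℕ) < k)
      (Finset.univ.filter fun i : Fin d => k ≤ (i : ℕ)) A) :
    A = (projMat d k)ᵀ * coreMat d k hkd A * projMat d k :=
  pqr_factorization_general d k hkd A hA
end

section
/- (FTRL regret bound.) Let S ⊆ ℝ^n be a nonempty, compact, convex set, let η > 0, and let R : ℝ^n → ℝ be continuous and 1-strongly convex on S with respect to the Euclidean norm. Let f₁,…,f_T : ℝ^n → ℝ be convex differentiable functions. Let θ₁ ∈ S minimize R over S and, for each t, let g_t = ∇f_t(θ_t) and let θ_{t+1} ∈ S minimize θ ↦ η Σ_{s=1}^{t} g_s · θ + R(θ) over S. Then for every u ∈ S, Σ_{t=1}^T f_t(θ_t) − Σ_{t=1}^T f_t(u) ≤ 2η Σ_{t=1}^T ‖g_t‖² + (R(u) − R(θ₁))/η. -/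
/-!
By convexity of the losses the regret is at most the linearized regret `∑ ⟪g t, θ t - u⟫`, which
splits as `∑ ⟪g t, θ t - θ (t + 1)⟫ + ∑ ⟪g t, θ (t + 1) - u⟫`. The second sum is at most
`(R u - R (θ 1)) / η` by the be-the-leader lemma. For the first, `θ t` and `θ (t + 1)` minimize
two `1`-strongly convex objectives that differ by `η ⟪g t, ·⟫`; quadratic growth at both
minimizers gives `‖θ t - θ (t + 1)‖ ^ 2 ≤ η ⟪g t, θ t - θ (t + 1)⟫`, so
`‖θ t - θ (t + 1)‖ ≤ η ‖g t‖` and each term is at most `η ‖g t‖ ^ 2`.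
-/

open Finset RealInnerProductSpace Filter Topology

section NormedSpace

variable {E : Type*} [NormedAddCommGroup E] [NormedSpace ℝ E] {s : Set E} {f : E → ℝ} {m : ℝ}
  {x y : E}

lemma ConvexOn.le_sub_of_hasFDerivAt {f' : E →L[ℝ] ℝ} (hf : ConvexOn ℝ s f) (hx : x ∈ s)
    (hy : y ∈ s) (hd : HasFDerivAt f f' x) : f' (y - x) ≤ f y - f x := by
  have hφ : ConvexOn ℝ (AffineMap.lineMap x y ⁻¹' s) (f ∘ AffineMap.lineMap x y) :=
    hf.comp_affineMap _
  have hφ' : HasDerivAt (f ∘ AffineMap.lineMap x y) (f' (y - x)) (0 : ℝ) := by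
    have hd' : HasFDerivAt f f' (AffineMap.lineMap x y (0 : ℝ)) := by simpa using hd
    simpa using hd'.comp_hasDerivAt 0 AffineMap.hasDerivAt_lineMap
  simpa [slope] using hφ.le_slope_of_hasDerivAt (by simpa using hx) (by simpa using hy)
    zero_lt_one hφ'

lemma StrongConvexOn.add_convexOn {g : E → ℝ} (hf : StrongConvexOn s m f)
    (hg : ConvexOn ℝ s g) : StrongConvexOn s m (f + g) := by
  have h := hf.add (uniformConvexOn_zero.2 hg)
  rwa [add_zero] at h

lemma StrongConvexOn.add_sq_norm_sub_le_of_isMinOn (hf : StrongConvexOn s m f)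
    (hmin : IsMinOn f s x) (hx : x ∈ s) (hy : y ∈ s) : f x + m / 2 * ‖y - x‖ ^ 2 ≤ f y := by
  set c := m / 2 * ‖y - x‖ ^ 2
  -- `x` beats every point `(1 - ε) • y + ε • x` of the segment; then let `ε → 1`.
  have hsegment : ∀ ε ∈ Set.Ioo (0 : ℝ) 1, f x + ε * c ≤ f y := by
    rintro ε ⟨hε0, hε1⟩
    have hseg := hf.1 hy hx (sub_nonneg.2 hε1.le) hε0.le (sub_add_cancel 1 ε)
    have hconv := hf.2 hy hx (sub_nonneg.2 hε1.le) hε0.le (sub_add_cancel 1 ε)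
    have hle := isMinOn_iff.1 hmin _ hseg
    simp only [smul_eq_mul] at hconv
    have : (1 - ε) * (f x + ε * c) ≤ (1 - ε) * f y := by linear_combination hle + hconv
    exact le_of_mul_le_mul_left this (sub_pos.2 hε1)
  have hlim : Tendsto (fun ε : ℝ ↦ f x + ε * c) (𝓝[<] 1) (𝓝 (f x + 1 * c)) :=
    tendsto_nhdsWithin_of_tendsto_nhds (Continuous.tendsto (by fun_prop) 1)
  rw [one_mul] at hlim
  refine le_of_tendsto hlim ?_
  filter_upwards [Ioo_mem_nhdsLT zero_lt_one] with ε hε using hsegment ε hε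

end NormedSpace

section InnerProductSpace

variable {E : Type*} [NormedAddCommGroup E] [InnerProductSpace ℝ E] {s : Set E} {F : E → ℝ}
  {m : ℝ} {x y : E}

lemma ConvexOn.sub_le_inner_gradient [CompleteSpace E] (hF : ConvexOn ℝ s F) (hx : x ∈ s)
    (hy : y ∈ s) (hd : DifferentiableAt ℝ F x) : F x - F y ≤ ⟪gradient F x, x - y⟫ := by
  have := hF.le_sub_of_hasFDerivAt hx hy hd.hasFDerivAt
  rw [← inner_gradient_left, ← neg_sub x y, inner_neg_right] at this
  linarith

lemma StrongConvexOn.inner_sub_le_of_isMinOn_add_inner (hF : StrongConvexOn s m F) (hm : 0 < m)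
    {η : ℝ} (hη : 0 ≤ η) {v p q : E} (hp : p ∈ s) (hq : q ∈ s) (hpmin : IsMinOn F s p)
    (hqmin : IsMinOn (fun z ↦ F z + η * ⟪v, z⟫) s q) : m * ⟪v, p - q⟫ ≤ η * ‖v‖ ^ 2 := by
  have hG : StrongConvexOn s m (fun z ↦ F z + η * ⟪v, z⟫) :=
    hF.add_convexOn ((η • innerₗ E v).convexOn hF.1)
  have hgrowF := hF.add_sq_norm_sub_le_of_isMinOn hpmin hp hq
  have hgrowG := hG.add_sq_norm_sub_le_of_isMinOn hqmin hq hp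
  rw [norm_sub_rev] at hgrowF
  set d := ‖p - q‖
  have hgap : m * d ^ 2 ≤ η * ⟪v, p - q⟫ := by
    rw [inner_sub_right]
    linarith
  have hcs : ⟪v, p - q⟫ ≤ ‖v‖ * d := real_inner_le_norm v (p - q)
  have hd : m * d ≤ η * ‖v‖ := by
    rcases (show 0 ≤ d from norm_nonneg _).eq_or_lt with hd0 | hdpos
    · rw [← hd0, mul_zero]; positivity
    · nlinarith
  calc m * ⟪v, p - q⟫ ≤ m * (‖v‖ * d) := mul_le_mul_of_nonneg_left hcs hm.le
    _ = ‖v‖ * (m * d) := by ring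
    _ ≤ ‖v‖ * (η * ‖v‖) := mul_le_mul_of_nonneg_left hd (norm_nonneg v)
    _ = η * ‖v‖ ^ 2 := by ring

-- `θ (t + 1)` minimizes `ftrlObjective η R g t`; the case `t = 0` is `θ 1` minimizing `R`.
def ftrlObjective (η : ℝ) (R : E → ℝ) (g : ℕ → E) (t : ℕ) (x : E) : ℝ :=
  R x + ∑ i ∈ Icc 1 t, η * ⟪g i, x⟫

@[simp]
lemma ftrlObjective_zero (η : ℝ) (R : E → ℝ) (g : ℕ → E) : ftrlObjective η R g 0 = R := by
  ext x
  simp [ftrlObjective]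

lemma ftrlObjective_succ (η : ℝ) (R : E → ℝ) (g : ℕ → E) (t : ℕ) :
    ftrlObjective η R g (t + 1) = fun x ↦ ftrlObjective η R g t x + η * ⟪g (t + 1), x⟫ := by
  ext x
  simp only [ftrlObjective, sum_Icc_succ_top (by omega : 1 ≤ t + 1)]
  ring

lemma strongConvexOn_ftrlObjective {R : E → ℝ} (hR : StrongConvexOn s m R) (η : ℝ)
    (g : ℕ → E) (t : ℕ) : StrongConvexOn s m (ftrlObjective η R g t) := by
  induction t with
  | zero => rwa [ftrlObjective_zero]
  | succ t ih =>
    rw [ftrlObjective_succ]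
    exact ih.add_convexOn ((η • innerₗ E (g (t + 1))).convexOn hR.1)

end InnerProductSpace

lemma be_the_leader {α : Type*} {s : Set α} (R : α → ℝ) (ℓ : ℕ → α → ℝ) (θ : ℕ → α) (T : ℕ)
    (hmem : ∀ t ≤ T, θ (t + 1) ∈ s)
    (hmin : ∀ t ≤ T, IsMinOn (fun x ↦ R x + ∑ i ∈ Icc 1 t, ℓ i x) s (θ (t + 1))) :
    ∀ w ∈ s, R (θ 1) + ∑ t ∈ Icc 1 T, ℓ t (θ (t + 1)) ≤ R w + ∑ t ∈ Icc 1 T, ℓ t w := by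
  induction T with
  | zero => simpa [isMinOn_iff] using hmin 0 le_rfl
  | succ T ih =>
    intro w hw
    have hprev := ih (fun t ht ↦ hmem t (by omega)) (fun t ht ↦ hmin t (by omega))
      (θ (T + 2)) (hmem (T + 1) le_rfl)
    have hcur := isMinOn_iff.1 (hmin (T + 1) le_rfl) w hw
    simp only [sum_Icc_succ_top (by omega : 1 ≤ T + 1)] at hcur ⊢
    linarith

section FTRL

variable {E : Type*} [NormedAddCommGroup E] [InnerProductSpace ℝ E] {s : Set E} {η : ℝ}
  {R : E → ℝ} {g θ : ℕ → E} {T : ℕ}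

lemma sum_inner_sub_le_of_isMinOn_ftrlObjective (hR : StrongConvexOn s 1 R) (hη : 0 < η)
    (hmem : ∀ t ≤ T, θ (t + 1) ∈ s)
    (hmin : ∀ t ≤ T, IsMinOn (ftrlObjective η R g t) s (θ (t + 1))) {u : E} (hu : u ∈ s) :
    ∑ t ∈ Icc 1 T, ⟪g t, θ t - u⟫ ≤
      η * ∑ t ∈ Icc 1 T, ‖g t‖ ^ 2 + (R u - R (θ 1)) / η := by
  have hstab : ∀ t ∈ Icc 1 T, ⟪g t, θ t - θ (t + 1)⟫ ≤ η * ‖g t‖ ^ 2 := by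
    intro t ht
    obtain ⟨k, rfl⟩ : ∃ k, t = k + 1 := ⟨t - 1, by grind⟩
    have hk : k + 1 ≤ T := (mem_Icc.1 ht).2
    have hnext := hmin (k + 1) hk
    rw [ftrlObjective_succ] at hnext
    simpa using (strongConvexOn_ftrlObjective hR η g k).inner_sub_le_of_isMinOn_add_inner one_pos
      hη.le (hmem k (by omega)) (hmem (k + 1) hk) (hmin k (by omega)) hnext
  have hbtl := be_the_leader R (fun t x ↦ η * ⟪g t, x⟫) θ T hmem hmin u hu
  have hsplit : ∀ t, ⟪g t, θ t - u⟫ =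
      ⟪g t, θ t - θ (t + 1)⟫ + (η * ⟪g t, θ (t + 1)⟫ - η * ⟪g t, u⟫) / η := fun t ↦ by
    rw [← mul_sub, mul_div_cancel_left₀ _ hη.ne', ← inner_sub_right, ← inner_add_right,
      sub_add_sub_cancel]
  calc ∑ t ∈ Icc 1 T, ⟪g t, θ t - u⟫
      = ∑ t ∈ Icc 1 T, ⟪g t, θ t - θ (t + 1)⟫ + (∑ t ∈ Icc 1 T, η * ⟪g t, θ (t + 1)⟫
          - ∑ t ∈ Icc 1 T, η * ⟪g t, u⟫) / η := by
        rw [sum_congr rfl fun t _ ↦ hsplit t, sum_add_distrib, ← sum_div, sum_sub_distrib]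
    _ ≤ η * ∑ t ∈ Icc 1 T, ‖g t‖ ^ 2 + (R u - R (θ 1)) / η := by
        rw [mul_sum]
        exact add_le_add (sum_le_sum hstab) (div_le_div_of_nonneg_right (by linarith) hη.le)

end FTRL

theorem ftrl_regret_bound_general (n T : ℕ)
    (S : Set (EuclideanSpace ℝ (Fin n)))
    (η : ℝ) (hη : 0 < η)
    (R : EuclideanSpace ℝ (Fin n) → ℝ)
    (hR_sc : StrongConvexOn S 1 R)
    (f : ℕ → EuclideanSpace ℝ (Fin n) → ℝ)
    (hf_cvx : ∀ t, ConvexOn ℝ Set.univ (f t))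
    (hf_diff : ∀ t, Differentiable ℝ (f t))
    (θ : ℕ → EuclideanSpace ℝ (Fin n))
    (g : ℕ → EuclideanSpace ℝ (Fin n))
    (hg : ∀ t, g t = gradient (f t) (θ t))
    (hθ1 : θ 1 ∈ S ∧ ∀ u ∈ S, R (θ 1) ≤ R u)
    (hstep : ∀ t, 1 ≤ t → t ≤ T →
      θ (t + 1) ∈ S ∧ ∀ u ∈ S,
        η * (∑ s ∈ Finset.Icc 1 t, ⟪g s, θ (t + 1)⟫) + R (θ (t + 1)) ≤
          η * (∑ s ∈ Finset.Icc 1 t, ⟪g s, u⟫) + R u) :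
    ∀ u ∈ S,
      (∑ t ∈ Finset.Icc 1 T, f t (θ t)) - (∑ t ∈ Finset.Icc 1 T, f t u) ≤
        2 * η * (∑ t ∈ Finset.Icc 1 T, ‖g t‖ ^ 2) + (R u - R (θ 1)) / η := by
  intro u hu
  have hmin : ∀ t ≤ T, θ (t + 1) ∈ S ∧ IsMinOn (ftrlObjective η R g t) S (θ (t + 1)) := by
    intro t ht
    rcases Nat.eq_zero_or_pos t with rfl | ht0
    · simpa [isMinOn_iff] using hθ1
    · obtain ⟨hmem, hle⟩ := hstep t ht0 ht
      refine ⟨hmem, isMinOn_iff.2 fun w hw ↦ ?_⟩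
      simpa only [ftrlObjective, ← mul_sum, add_comm (R _)] using hle w hw
  have hlinear := sum_inner_sub_le_of_isMinOn_ftrlObjective hR_sc hη (fun t ht ↦ (hmin t ht).1)
    (fun t ht ↦ (hmin t ht).2) hu
  have hsq : 0 ≤ ∑ t ∈ Icc 1 T, ‖g t‖ ^ 2 := sum_nonneg fun t _ ↦ by positivity
  calc (∑ t ∈ Icc 1 T, f t (θ t)) - ∑ t ∈ Icc 1 T, f t u
      ≤ ∑ t ∈ Icc 1 T, ⟪g t, θ t - u⟫ := by
        rw [← sum_sub_distrib]
        exact sum_le_sum fun t _ ↦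
          hg t ▸ (hf_cvx t).sub_le_inner_gradient trivial trivial (hf_diff t _)
    _ ≤ η * ∑ t ∈ Icc 1 T, ‖g t‖ ^ 2 + (R u - R (θ 1)) / η := hlinear
    _ ≤ 2 * η * ∑ t ∈ Icc 1 T, ‖g t‖ ^ 2 + (R u - R (θ 1)) / η := by
        linarith [mul_nonneg hη.le hsq]

/-- **FTRL regret bound.**  Let `S ⊆ ℝ^n` be a nonempty, compact, convex set,
`η > 0`, and `R` a continuous regularizer that is `1`-strongly convex on `S`
w.r.t. the Euclidean norm.  Let `f 1, …, f T` be convex differentiable losses,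
let `θ 1 ∈ S` minimize `R` over `S`, let `g t = ∇ (f t) (θ t)` and, for
`1 ≤ t ≤ T`, let `θ (t+1) ∈ S` minimize `θ ↦ η Σ_{s=1}^t ⟪g s, θ⟫ + R θ`
over `S`.  Then for every `u ∈ S`,
`Σ_{t=1}^T f t (θ t) − Σ_{t=1}^T f t u ≤ 2η Σ_{t=1}^T ‖g t‖² + (R u − R (θ 1))/η`. -/
theorem ftrl_regret_bound (n T : ℕ)
    (S : Set (EuclideanSpace ℝ (Fin n))) (hS_ne : S.Nonempty)
    (hS_cpt : IsCompact S) (hS_cvx : Convex ℝ S)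
    (η : ℝ) (hη : 0 < η)
    (R : EuclideanSpace ℝ (Fin n) → ℝ) (hR_cont : Continuous R)
    (hR_sc : StrongConvexOn S 1 R)
    (f : ℕ → EuclideanSpace ℝ (Fin n) → ℝ)
    (hf_cvx : ∀ t, ConvexOn ℝ Set.univ (f t))
    (hf_diff : ∀ t, Differentiable ℝ (f t))
    (θ : ℕ → EuclideanSpace ℝ (Fin n))
    (g : ℕ → EuclideanSpace ℝ (Fin n))
    (hg : ∀ t, g t = gradient (f t) (θ t))
    (hθ1 : θ 1 ∈ S ∧ ∀ u ∈ S, R (θ 1) ≤ R u)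
    (hstep : ∀ t, 1 ≤ t → t ≤ T →
      θ (t + 1) ∈ S ∧ ∀ u ∈ S,
        η * (∑ s ∈ Finset.Icc 1 t, ⟪g s, θ (t + 1)⟫) + R (θ (t + 1)) ≤
          η * (∑ s ∈ Finset.Icc 1 t, ⟪g s, u⟫) + R u) :
    ∀ u ∈ S,
      (∑ t ∈ Finset.Icc 1 T, f t (θ t)) - (∑ t ∈ Finset.Icc 1 T, f t u) ≤
        2 * η * (∑ t ∈ Finset.Icc 1 T, ‖g t‖ ^ 2) + (R u - R (θ 1)) / η :=
  ftrl_regret_bound_general n T S η hη R hR_sc f hf_cvx hf_diff θ g hg hθ1 hstep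
end
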